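/- Let Ω ⊂ ℝ^d be an open convex set, π a supporting hyperplane of Ω, and σ : [a,b] → Ω a C¹ path. Then ∫_a^b ⟨ν_π(σ(t)), σ'(t)⟩ / d(σ(t),π) dt = log( d(σ(a),π) / d(σ(b),π) ). Consequently, for any C¹ path σ from x to y, the Funk length ∫_a^b p_{Ω,σ(t)}(σ'(t)) dt is at least F(x,y) = sup_π log(d(x,π)/d(y,π)). -/

import Mathlib

/-!
On `Ω` the distance to a supporting hyperplane `π = {⟪ν, ·⟫ = c}` is the positive affine function
`c - ⟪ν, ·⟫`, so `⟪ν, σ'⟫ / d(σ, π) = -(log d(σ, π))'` and the identity is the fundamental theorem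
of calculus. Each such integrand is pointwise at most `p(σ, σ')`; the supremum defining `p` is
finite because every supporting hyperplane lies in `Ωᶜ`, whence `d(q, π) ≥ d(q, Ωᶜ) > 0`.
Integrating and taking the supremum over `π` gives the length bound.
-/

/-- The affine hyperplane {p : ⟪ν, p⟫ = c}. -/
def hyperplane {d : ℕ} (ν : EuclideanSpace ℝ (Fin d)) (c : ℝ) :
    Set (EuclideanSpace ℝ (Fin d)) :=
  {p | (inner ℝ ν p : ℝ) = c}

/-- The hyperplane {⟪ν,·⟫ = c} (with unit normal ν) supports Ω: Ω lies in the closed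
half-space {⟪ν,·⟫ ≤ c} and the hyperplane touches the closure of Ω. -/
def IsSupporting {d : ℕ} (Ω : Set (EuclideanSpace ℝ (Fin d)))
    (ν : EuclideanSpace ℝ (Fin d)) (c : ℝ) : Prop :=
  ‖ν‖ = 1 ∧ (∀ p ∈ Ω, (inner ℝ ν p : ℝ) ≤ c) ∧ ∃ b ∈ closure Ω, (inner ℝ ν b : ℝ) = c

theorem hyperplane_nonempty {d : ℕ} {ν : EuclideanSpace ℝ (Fin d)} (hν : ‖ν‖ = 1) (c : ℝ) :
    (hyperplane ν c).Nonempty :=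
  ⟨c • ν, by
    simp only [hyperplane, Set.mem_ofPred_eq, real_inner_smul_right, real_inner_self_eq_norm_sq,
      hν]
    ring⟩

theorem infDist_hyperplane {d : ℕ} {ν : EuclideanSpace ℝ (Fin d)} (hν : ‖ν‖ = 1) (c : ℝ)
    (q : EuclideanSpace ℝ (Fin d)) :
    Metric.infDist q (hyperplane ν c) = |inner ℝ ν q - c| := by
  refine le_antisymm ?_ ?_
  · have hfoot : q + (c - inner ℝ ν q) • ν ∈ hyperplane ν c := by
      simp only [hyperplane, Set.mem_ofPred_eq, inner_add_right, real_inner_smul_right,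
        real_inner_self_eq_norm_sq, hν]
      ring
    calc Metric.infDist q (hyperplane ν c) ≤ dist q (q + (c - inner ℝ ν q) • ν) :=
          Metric.infDist_le_dist_of_mem hfoot
      _ = |inner ℝ ν q - c| := by
          rw [dist_self_add_right, norm_smul, hν, mul_one, Real.norm_eq_abs, abs_sub_comm]
  · refine (Metric.le_infDist (hyperplane_nonempty hν c)).2 fun p (hp : inner ℝ ν p = c) => ?_
    calc |inner ℝ ν q - c| = |inner ℝ ν (q - p)| := by rw [inner_sub_right, hp]
      _ ≤ ‖ν‖ * ‖q - p‖ := abs_real_inner_le_norm ν (q - p)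
      _ = dist q p := by rw [hν, one_mul, dist_eq_norm]

theorem intervalIntegral.integral_deriv_div_eq_log_div {f f' : ℝ → ℝ} {a b : ℝ}
    (hf : ∀ t ∈ Set.uIcc a b, HasDerivAt f (f' t) t) (hf' : ContinuousOn f' (Set.uIcc a b))
    (hpos : ∀ t ∈ Set.uIcc a b, 0 < f t) :
    ∫ t in a..b, f' t / f t = Real.log (f b / f a) := by
  have hderiv : ∀ t ∈ Set.uIcc a b, HasDerivAt (fun s => Real.log (f s)) (f' t / f t) t :=
    fun t ht => (hf t ht).log (hpos t ht).ne'
  have hint : IntervalIntegrable (fun t => f' t / f t) MeasureTheory.volume a b :=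
    (hf'.div (HasDerivAt.continuousOn hf) fun t ht => (hpos t ht).ne').intervalIntegrable
  rw [intervalIntegral.integral_eq_sub_of_hasDerivAt hderiv hint,
    Real.log_div (hpos b Set.right_mem_uIcc).ne' (hpos a Set.left_mem_uIcc).ne']

namespace IsSupporting

variable {d : ℕ} {Ω : Set (EuclideanSpace ℝ (Fin d))} {ν q : EuclideanSpace ℝ (Fin d)} {c : ℝ}

theorem inner_lt (hsupp : IsSupporting Ω ν c) (hΩo : IsOpen Ω) (hq : q ∈ Ω) :
    inner ℝ ν q < c := by
  obtain ⟨hν, hle, -⟩ := hsupp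
  obtain ⟨ε, hε, hball⟩ := Metric.isOpen_iff.1 hΩo q hq
  have hmem : q + (ε / 2) • ν ∈ Ω := hball <| by
    rw [Metric.mem_ball, dist_self_add_left, norm_smul, hν, mul_one, Real.norm_eq_abs,
      abs_of_pos (half_pos hε)]
    exact half_lt_self hε
  have := hle _ hmem
  rw [inner_add_right, real_inner_smul_right, real_inner_self_eq_norm_sq, hν] at this
  linarith

theorem hyperplane_subset_compl (hsupp : IsSupporting Ω ν c) (hΩo : IsOpen Ω) :
    hyperplane ν c ⊆ Ωᶜ :=
  fun _ (hp : inner ℝ ν _ = c) hpΩ => (hsupp.inner_lt hΩo hpΩ).ne hp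

theorem infDist_hyperplane_eq (hsupp : IsSupporting Ω ν c) (hΩo : IsOpen Ω) (hq : q ∈ Ω) :
    Metric.infDist q (hyperplane ν c) = c - inner ℝ ν q := by
  rw [infDist_hyperplane hsupp.1, abs_of_neg (sub_neg.2 (hsupp.inner_lt hΩo hq)), neg_sub]

theorem infDist_hyperplane_pos (hsupp : IsSupporting Ω ν c) (hΩo : IsOpen Ω) (hq : q ∈ Ω) :
    0 < Metric.infDist q (hyperplane ν c) := by
  rw [hsupp.infDist_hyperplane_eq hΩo hq, sub_pos]
  exact hsupp.inner_lt hΩo hq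

theorem integral_inner_div_infDist (hsupp : IsSupporting Ω ν c) (hΩo : IsOpen Ω) {a b : ℝ}
    (hab : a ≤ b) {σ σ' : ℝ → EuclideanSpace ℝ (Fin d)}
    (hσ : ∀ t ∈ Set.Icc a b, HasDerivAt σ (σ' t) t) (hσ' : ContinuousOn σ' (Set.Icc a b))
    (hσΩ : ∀ t ∈ Set.Icc a b, σ t ∈ Ω) :
    ∫ t in a..b, inner ℝ ν (σ' t) / Metric.infDist (σ t) (hyperplane ν c) =
      Real.log (Metric.infDist (σ a) (hyperplane ν c) /
        Metric.infDist (σ b) (hyperplane ν c)) := by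
  rw [← Set.uIcc_of_le hab] at hσ hσ' hσΩ
  have hdist : ∀ t ∈ Set.uIcc a b,
      Metric.infDist (σ t) (hyperplane ν c) = c - inner ℝ ν (σ t) :=
    fun t ht => hsupp.infDist_hyperplane_eq hΩo (hσΩ t ht)
  have hderiv : ∀ t ∈ Set.uIcc a b,
      HasDerivAt (fun s => c - inner ℝ ν (σ s)) (-inner ℝ ν (σ' t)) t :=
    fun t ht => ((innerSL ℝ ν).hasFDerivAt.comp_hasDerivAt t (hσ t ht)).const_sub c
  have hpos : ∀ t ∈ Set.uIcc a b, 0 < c - inner ℝ ν (σ t) :=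
    fun t ht => sub_pos.2 (hsupp.inner_lt hΩo (hσΩ t ht))
  calc ∫ t in a..b, inner ℝ ν (σ' t) / Metric.infDist (σ t) (hyperplane ν c)
      = -∫ t in a..b, -inner ℝ ν (σ' t) / (c - inner ℝ ν (σ t)) := by
        rw [← intervalIntegral.integral_neg]
        refine intervalIntegral.integral_congr fun t ht => ?_
        simp only [hdist t ht, neg_div, neg_neg]
    _ = Real.log ((c - inner ℝ ν (σ a)) / (c - inner ℝ ν (σ b))) := by
        rw [intervalIntegral.integral_deriv_div_eq_log_div hderiv
          ((innerSL ℝ ν).continuous.comp_continuousOn hσ').neg hpos, ← Real.log_inv, inv_div]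
    _ = _ := by rw [hdist a Set.left_mem_uIcc, hdist b Set.right_mem_uIcc]

theorem intervalIntegrable_inner_div_infDist (hsupp : IsSupporting Ω ν c) (hΩo : IsOpen Ω)
    {a b : ℝ} {σ σ' : ℝ → EuclideanSpace ℝ (Fin d)} (hσ : ContinuousOn σ (Set.uIcc a b))
    (hσ' : ContinuousOn σ' (Set.uIcc a b)) (hσΩ : ∀ t ∈ Set.uIcc a b, σ t ∈ Ω) :
    IntervalIntegrable (fun t => inner ℝ ν (σ' t) / Metric.infDist (σ t) (hyperplane ν c))
      MeasureTheory.volume a b :=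
  (((innerSL ℝ ν).continuous.comp_continuousOn hσ').div
    ((Metric.continuous_infDist_pt _).comp_continuousOn hσ)
    fun t ht => (hsupp.infDist_hyperplane_pos hΩo (hσΩ t ht)).ne').intervalIntegrable

theorem bddAbove_inner_div_infDist (hsupp : IsSupporting Ω ν c) (hΩo : IsOpen Ω) (hq : q ∈ Ω)
    (ξ : EuclideanSpace ℝ (Fin d)) :
    BddAbove {r : ℝ | ∃ ν' c', IsSupporting Ω ν' c' ∧
      r = inner ℝ ν' ξ / Metric.infDist q (hyperplane ν' c')} := by
  have hcompl : Ωᶜ.Nonempty :=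
    (hyperplane_nonempty hsupp.1 c).mono (hsupp.hyperplane_subset_compl hΩo)
  have hq_pos : 0 < Metric.infDist q Ωᶜ :=
    (hΩo.isClosed_compl.notMem_iff_infDist_pos hcompl).1 (Set.notMem_compl_iff.2 hq)
  refine ⟨‖ξ‖ / Metric.infDist q Ωᶜ, ?_⟩
  rintro r ⟨ν', c', hsupp', rfl⟩
  have hle : Metric.infDist q Ωᶜ ≤ Metric.infDist q (hyperplane ν' c') :=
    Metric.infDist_le_infDist_of_subset (hsupp'.hyperplane_subset_compl hΩo)
      (hyperplane_nonempty hsupp'.1 c')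
  calc inner ℝ ν' ξ / Metric.infDist q (hyperplane ν' c')
      ≤ ‖ξ‖ / Metric.infDist q (hyperplane ν' c') := by
        refine div_le_div_of_nonneg_right ?_ Metric.infDist_nonneg
        simpa [hsupp'.1] using real_inner_le_norm ν' ξ
    _ ≤ ‖ξ‖ / Metric.infDist q Ωᶜ := div_le_div_of_nonneg_left (norm_nonneg ξ) hq_pos hle

theorem inner_div_infDist_le_sSup (hsupp : IsSupporting Ω ν c) (hΩo : IsOpen Ω) (hq : q ∈ Ω)
    (ξ : EuclideanSpace ℝ (Fin d)) :
    inner ℝ ν ξ / Metric.infDist q (hyperplane ν c) ≤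
      sSup {r : ℝ | ∃ ν' c', IsSupporting Ω ν' c' ∧
        r = inner ℝ ν' ξ / Metric.infDist q (hyperplane ν' c')} :=
  le_csSup (hsupp.bddAbove_inner_div_infDist hΩo hq ξ) ⟨ν, c, hsupp, rfl⟩

end IsSupporting

theorem stmt15_general {d : ℕ} (Ω : Set (EuclideanSpace ℝ (Fin d)))
    (hΩo : IsOpen Ω)
    (ν : EuclideanSpace ℝ (Fin d)) (c : ℝ) (hsupp : IsSupporting Ω ν c)
    (a b : ℝ) (hab : a ≤ b)
    (σ σ' : ℝ → EuclideanSpace ℝ (Fin d))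
    (hσ : ∀ t ∈ Set.Icc a b, HasDerivAt σ (σ' t) t)
    (hσ' : ContinuousOn σ' (Set.Icc a b))
    (hσΩ : ∀ t ∈ Set.Icc a b, σ t ∈ Ω)
    (p : EuclideanSpace ℝ (Fin d) → EuclideanSpace ℝ (Fin d) → ℝ)
    (hp : ∀ q ξ, p q ξ = sSup {r : ℝ | ∃ ν' c', IsSupporting Ω ν' c' ∧
      r = (inner ℝ ν' ξ : ℝ) / Metric.infDist q (hyperplane ν' c')})
    (hint : IntervalIntegrable (fun t => p (σ t) (σ' t)) MeasureTheory.volume a b) :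
    (∫ t in a..b, (inner ℝ ν (σ' t) : ℝ) / Metric.infDist (σ t) (hyperplane ν c)) =
      Real.log (Metric.infDist (σ a) (hyperplane ν c) /
        Metric.infDist (σ b) (hyperplane ν c)) ∧
    sSup {r : ℝ | ∃ ν' c', IsSupporting Ω ν' c' ∧
        r = Real.log (Metric.infDist (σ a) (hyperplane ν' c') /
              Metric.infDist (σ b) (hyperplane ν' c'))} ≤
      ∫ t in a..b, p (σ t) (σ' t) := by
  refine ⟨hsupp.integral_inner_div_infDist hΩo hab hσ hσ' hσΩ,
    csSup_le ⟨_, ν, c, hsupp, rfl⟩ ?_⟩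
  rintro r ⟨ν', c', hsupp', rfl⟩
  rw [← hsupp'.integral_inner_div_infDist hΩo hab hσ hσ' hσΩ]
  rw [← Set.uIcc_of_le hab] at hσ hσ' hσΩ
  refine intervalIntegral.integral_mono_on hab ?_ hint fun t ht => ?_
  · exact hsupp'.intervalIntegrable_inner_div_infDist hΩo (HasDerivAt.continuousOn hσ) hσ' hσΩ
  · rw [hp]
    exact hsupp'.inner_div_infDist_le_sSup hΩo (hσΩ t (Set.uIcc_of_le hab ▸ ht)) (σ' t)

/-- For a C¹ path σ in Ω and a supporting hyperplane π of Ω,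
∫ₐᵇ ⟪ν_π,σ'(t)⟫/d(σ(t),π) dt = log(d(σ(a),π)/d(σ(b),π)); consequently the Funk length
∫ₐᵇ p_{Ω,σ(t)}(σ'(t)) dt of σ is at least F(σ(a),σ(b)) = sup_π log(d(σ(a),π)/d(σ(b),π)). -/
theorem stmt15 {d : ℕ} (Ω : Set (EuclideanSpace ℝ (Fin d)))
    (hΩo : IsOpen Ω) (hΩc : Convex ℝ Ω)
    (ν : EuclideanSpace ℝ (Fin d)) (c : ℝ) (hsupp : IsSupporting Ω ν c)
    (a b : ℝ) (hab : a ≤ b)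
    (σ σ' : ℝ → EuclideanSpace ℝ (Fin d))
    (hσ : ∀ t ∈ Set.Icc a b, HasDerivAt σ (σ' t) t)
    (hσ' : ContinuousOn σ' (Set.Icc a b))
    (hσΩ : ∀ t ∈ Set.Icc a b, σ t ∈ Ω)
    (p : EuclideanSpace ℝ (Fin d) → EuclideanSpace ℝ (Fin d) → ℝ)
    (hp : ∀ q ξ, p q ξ = sSup {r : ℝ | ∃ ν' c', IsSupporting Ω ν' c' ∧
      r = (inner ℝ ν' ξ : ℝ) / Metric.infDist q (hyperplane ν' c')})
    (hint : IntervalIntegrable (fun t => p (σ t) (σ' t)) MeasureTheory.volume a b) :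
    (∫ t in a..b, (inner ℝ ν (σ' t) : ℝ) / Metric.infDist (σ t) (hyperplane ν c)) =
      Real.log (Metric.infDist (σ a) (hyperplane ν c) /
        Metric.infDist (σ b) (hyperplane ν c)) ∧
    sSup {r : ℝ | ∃ ν' c', IsSupporting Ω ν' c' ∧
        r = Real.log (Metric.infDist (σ a) (hyperplane ν' c') /
              Metric.infDist (σ b) (hyperplane ν' c'))} ≤
      ∫ t in a..b, p (σ t) (σ' t) :=
  stmt15_general Ω hΩo ν c hsupp a b hab σ σ' hσ hσ' hσΩ p hp hint
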